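/- arXiv:math/0503723 — 2 statements merged into one kernel-verified Lean document; each statement's English description precedes it below -/
import Mathlib

section
/- Let n ≥ 2 and p > 0. If f is holomorphic on the unit polydisc U^n and the quantity Σ_{k=1}^n |∂f/∂z_k(z)| (1−|z_k|²)^p tends to 0 as z tends to the boundary ∂U^n (i.e., for every ε > 0 there is δ > 0 such that the sum is < ε whenever dist(z, ∂U^n) < δ), then f is constant on U^n. -/
/-!
Fix coordinates `k ≠ l`. Moving the `k`-th coordinate of a point changes `f` by at most
`‖∂ₖf‖` times the displacement, and `‖∂ₖf‖ ≤ blochSum / (1 - |zₖ|²) ^ p` is uniformly small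
once `|z_l|` is close to `1`. So the difference of the `l`-slices of `f` through `z` and through
`z` with `zₖ` replaced by `ζ` is a holomorphic function on the unit disc tending to `0` at the
unit circle, and the maximum modulus principle forces it to vanish. Hence `f` is independent of
each coordinate separately, and therefore constant on the polydisc.
-/

open Metric Set Filter

noncomputable section

def polydisc (n : ℕ) : Set (Fin n → ℂ) := {z | ∀ j, ‖z j‖ < 1}

def blochSum (n : ℕ) (p : ℝ) (f : (Fin n → ℂ) → ℂ) (z : Fin n → ℂ) : ℝ :=
  ∑ k : Fin n, ‖fderiv ℂ f z (Pi.single k 1)‖ * (1 - ‖z k‖ ^ 2) ^ p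

def blochNorm (n : ℕ) (p : ℝ) (f : (Fin n → ℂ) → ℂ) : ℝ :=
  ‖f 0‖ + sSup (blochSum n p f '' polydisc n)

def MemBloch (n : ℕ) (p : ℝ) (f : (Fin n → ℂ) → ℂ) : Prop :=
  DifferentiableOn ℂ f (polydisc n) ∧ BddAbove (blochSum n p f '' polydisc n)

def IsPolyFn (n : ℕ) (g : (Fin n → ℂ) → ℂ) : Prop :=
  ∃ P : MvPolynomial (Fin n) ℂ, ∀ z, g z = MvPolynomial.eval z P

def MemLittleBloch (n : ℕ) (p : ℝ) (f : (Fin n → ℂ) → ℂ) : Prop :=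
  MemBloch n p f ∧ ∀ ε : ℝ, 0 < ε →
    ∃ g, IsPolyFn n g ∧ blochNorm n p (fun z => f z - g z) < ε

def MemLittleStarBloch (n : ℕ) (p : ℝ) (f : (Fin n → ℂ) → ℂ) : Prop :=
  MemBloch n p f ∧ ∀ z : ℕ → Fin n → ℂ, (∀ j, z j ∈ polydisc n) →
    (∀ k, Tendsto (fun j => ‖z j k‖) atTop (nhds 1)) →
    Tendsto (fun j => blochSum n p f (z j)) atTop (nhds 0)

def HoloSelfMap (n : ℕ) (φ : (Fin n → ℂ) → Fin n → ℂ) : Prop :=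
  DifferentiableOn ℂ φ (polydisc n) ∧ ∀ z ∈ polydisc n, φ z ∈ polydisc n

def compSum (n : ℕ) (p q : ℝ) (φ : (Fin n → ℂ) → Fin n → ℂ) (z : Fin n → ℂ) : ℝ :=
  ∑ k : Fin n, ∑ l : Fin n, ‖fderiv ℂ φ z (Pi.single k 1) l‖ *
    ((1 - ‖z k‖ ^ 2) ^ q / (1 - ‖φ z l‖ ^ 2) ^ p)

open Function

lemma polydisc_eq_pi (n : ℕ) : polydisc n = univ.pi fun _ : Fin n => ball (0 : ℂ) 1 := by
  ext z
  simp [polydisc]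

lemma isOpen_polydisc (n : ℕ) : IsOpen (polydisc n) := by
  rw [polydisc_eq_pi]
  exact isOpen_set_pi finite_univ fun _ _ => isOpen_ball

lemma update_mem_polydisc {n : ℕ} {z : Fin n → ℂ} (hz : z ∈ polydisc n) (k : Fin n) {ζ : ℂ}
    (hζ : ‖ζ‖ < 1) : update z k ζ ∈ polydisc n := by
  rw [polydisc_eq_pi] at hz ⊢
  exact (Set.update_mem_pi_iff_of_mem hz).mpr fun _ => mem_ball_zero_iff.mpr hζ

lemma update_mem_frontier_polydisc {n : ℕ} {z : Fin n → ℂ} (hz : z ∈ polydisc n) (k : Fin n)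
    {u : ℂ} (hu : ‖u‖ = 1) : update z k u ∈ frontier (polydisc n) := by
  rw [(isOpen_polydisc n).frontier_eq, polydisc_eq_pi, closure_pi_set,
    closure_ball (0 : ℂ) one_ne_zero]
  rw [polydisc_eq_pi] at hz
  refine ⟨(Set.update_mem_pi_iff_of_mem (Set.pi_mono (fun _ _ => ball_subset_closedBall) hz)).mpr
    fun _ => by simp [hu], fun h => ?_⟩
  simpa [hu] using h k (mem_univ k)

lemma Complex.exists_norm_eq_one_norm_sub_eq (x : ℂ) :
    ∃ u : ℂ, ‖u‖ = 1 ∧ ‖x - u‖ = |‖x‖ - 1| := by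
  refine ⟨exp (x.arg * I), norm_exp_ofReal_mul_I _, ?_⟩
  calc ‖x - exp (x.arg * I)‖ = ‖((‖x‖ - 1 : ℝ) : ℂ) * exp (x.arg * I)‖ := by
        rw [ofReal_sub, ofReal_one, sub_one_mul, norm_mul_exp_arg_mul_I]
    _ = |‖x‖ - 1| := by rw [norm_mul, norm_exp_ofReal_mul_I, mul_one, norm_real, Real.norm_eq_abs]

lemma infDist_frontier_polydisc_le {n : ℕ} {z : Fin n → ℂ} (hz : z ∈ polydisc n) (k : Fin n) :
    infDist z (frontier (polydisc n)) ≤ 1 - ‖z k‖ := by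
  obtain ⟨u, hu, hzu⟩ := Complex.exists_norm_eq_one_norm_sub_eq (z k)
  have hzk : ‖z k‖ < 1 := hz k
  refine (infDist_le_dist_of_mem (update_mem_frontier_polydisc hz k hu)).trans
    ((dist_pi_le_iff (by linarith)).mpr fun j => ?_)
  rcases eq_or_ne j k with rfl | hj
  · rw [update_self, dist_eq_norm, hzu, abs_of_neg (by linarith)]
    linarith
  · rw [update_of_ne hj, dist_self]
    linarith

lemma Complex.eq_zero_of_norm_le_near_unit_circle {F : Type*} [NormedAddCommGroup F]
    [NormedSpace ℂ F] {h : ℂ → F} (hd : DifferentiableOn ℂ h (ball 0 1))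
    (hsmall : ∀ ε : ℝ, 0 < ε → ∃ r < 1, ∀ w : ℂ, r < ‖w‖ → ‖w‖ < 1 → ‖h w‖ ≤ ε)
    {w₀ : ℂ} (hw₀ : ‖w₀‖ < 1) : h w₀ = 0 := by
  refine norm_le_zero_iff.mp (le_of_forall_pos_le_add fun ε hε => ?_)
  obtain ⟨r, hr1, hr⟩ := hsmall ε hε
  obtain ⟨ρ, hrρ, hρ1⟩ := exists_between (max_lt hr1 hw₀)
  have hρ0 : 0 < ρ := (norm_nonneg w₀).trans_lt ((le_max_right _ _).trans_lt hrρ)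
  have hdc : DiffContOnCl ℂ h (ball 0 ρ) := by
    refine (hd.mono ?_).diffContOnCl
    rw [closure_ball 0 hρ0.ne']
    exact closedBall_subset_ball hρ1
  have hfrontier : ∀ w ∈ frontier (ball (0 : ℂ) ρ), ‖h w‖ ≤ ε := by
    intro w hw
    rw [frontier_ball 0 hρ0.ne', mem_sphere_zero_iff_norm] at hw
    exact hr w (hw ▸ (le_max_left _ _).trans_lt hrρ) (hw ▸ hρ1)
  rw [zero_add]
  exact Complex.norm_le_of_forall_mem_frontier_norm_le isBounded_ball hdc hfrontier
    (subset_closure (mem_ball_zero_iff.mpr ((le_max_right _ _).trans_lt hrρ)))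

lemma apply_eq_of_forall_apply_update_eq {ι β : Type*} [Fintype ι] [DecidableEq ι]
    {α : ι → Type*} {t : ∀ i, Set (α i)} {f : (∀ i, α i) → β}
    (h : ∀ x ∈ univ.pi t, ∀ i, ∀ y ∈ t i, f (update x i y) = f x)
    {x y : ∀ i, α i} (hx : x ∈ univ.pi t) (hy : y ∈ univ.pi t) : f x = f y := by
  suffices ∀ s : Finset ι, f (s.piecewise y x) = f x by simpa using (this Finset.univ).symm
  intro s
  induction s using Finset.induction_on with
  | empty => simp
  | insert i s _ ih =>
    rw [Finset.piecewise_insert,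
      h _ (Finset.piecewise_mem_set_pi s hy hx) i (y i) (hy i trivial), ih]

def BlochSumTendstoZeroAtFrontier (n : ℕ) (p : ℝ) (f : (Fin n → ℂ) → ℂ) : Prop :=
  ∀ ε : ℝ, 0 < ε → ∃ δ : ℝ, 0 < δ ∧ ∀ z ∈ polydisc n,
    infDist z (frontier (polydisc n)) < δ → blochSum n p f z < ε

section

variable {n : ℕ} {p : ℝ} {f : (Fin n → ℂ) → ℂ}

lemma norm_fderiv_single_mul_le_blochSum {z : Fin n → ℂ} (hz : z ∈ polydisc n) (k : Fin n) :
    ‖fderiv ℂ f z (Pi.single k 1)‖ * (1 - ‖z k‖ ^ 2) ^ p ≤ blochSum n p f z := by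
  refine Finset.single_le_sum (f := fun j => ‖fderiv ℂ f z (Pi.single j 1)‖ * (1 - ‖z j‖ ^ 2) ^ p)
    (fun j _ => mul_nonneg (norm_nonneg _) (Real.rpow_nonneg ?_ p)) (Finset.mem_univ k)
  nlinarith [hz j, norm_nonneg (z j)]

lemma hasDerivAt_comp_update (hf : DifferentiableOn ℂ f (polydisc n)) {z : Fin n → ℂ}
    (k : Fin n) {ξ : ℂ} (hξ : update z k ξ ∈ polydisc n) :
    HasDerivAt (fun t => f (update z k t)) (fderiv ℂ f (update z k ξ) (Pi.single k 1)) ξ :=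
  (hf.differentiableAt ((isOpen_polydisc n).mem_nhds hξ)).hasFDerivAt.comp_hasDerivAt ξ
    (hasDerivAt_update z k ξ)

lemma differentiableOn_comp_update (hf : DifferentiableOn ℂ f (polydisc n)) {z : Fin n → ℂ}
    (hz : z ∈ polydisc n) (k : Fin n) :
    DifferentiableOn ℂ (fun w => f (update z k w)) (ball 0 1) := fun _ hw =>
  (hasDerivAt_comp_update hf k (update_mem_polydisc hz k (mem_ball_zero_iff.mp hw)))
    |>.differentiableAt.differentiableWithinAt

lemma norm_sub_comp_update_le (hp : 0 ≤ p) (hf : DifferentiableOn ℂ f (polydisc n))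
    {z : Fin n → ℂ} (hz : z ∈ polydisc n) (k : Fin n) {r B : ℝ} (hr : r < 1)
    (hB : ∀ ξ : ℂ, ‖ξ‖ ≤ r → blochSum n p f (update z k ξ) ≤ B)
    {ζ ξ : ℂ} (hζ : ‖ζ‖ ≤ r) (hξ : ‖ξ‖ ≤ r) :
    ‖f (update z k ζ) - f (update z k ξ)‖ ≤ B / (1 - r ^ 2) ^ p * ‖ζ - ξ‖ := by
  have hr0 : 0 ≤ r := (norm_nonneg ζ).trans hζ
  have hmem : ∀ η ∈ closedBall (0 : ℂ) r, update z k η ∈ polydisc n := fun η hη =>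
    update_mem_polydisc hz k ((mem_closedBall_zero_iff.mp hη).trans_lt hr)
  refine (convex_closedBall (0 : ℂ) r).norm_image_sub_le_of_norm_hasDerivWithin_le
    (fun η hη => (hasDerivAt_comp_update hf k (hmem η hη)).hasDerivWithinAt) (fun η hη => ?_)
    (mem_closedBall_zero_iff.mpr hξ) (mem_closedBall_zero_iff.mpr hζ)
  have hηr : ‖η‖ ≤ r := mem_closedBall_zero_iff.mp hη
  rw [le_div_iff₀ (Real.rpow_pos_of_pos (by nlinarith) p)]
  calc ‖fderiv ℂ f (update z k η) (Pi.single k 1)‖ * (1 - r ^ 2) ^ p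
      ≤ ‖fderiv ℂ f (update z k η) (Pi.single k 1)‖ * (1 - ‖η‖ ^ 2) ^ p := by
        gcongr
        nlinarith [norm_nonneg η]
    _ ≤ blochSum n p f (update z k η) := by
        simpa only [update_self] using
          norm_fderiv_single_mul_le_blochSum (f := f) (p := p) (hmem η hη) k
    _ ≤ B := hB η hηr

lemma norm_sub_comp_update_update_le_near_unit_circle (hp : 0 ≤ p)
    (hf : DifferentiableOn ℂ f (polydisc n)) (hlim : BlochSumTendstoZeroAtFrontier n p f)
    {k l : Fin n} (hkl : k ≠ l) {z : Fin n → ℂ} (hz : z ∈ polydisc n) {ζ : ℂ} (hζ : ‖ζ‖ < 1)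
    {ε : ℝ} (hε : 0 < ε) : ∃ r < 1, ∀ w : ℂ, r < ‖w‖ → ‖w‖ < 1 →
      ‖f (update (update z k ζ) l w) - f (update z l w)‖ ≤ ε := by
  set r₀ := max ‖ζ‖ ‖z k‖
  set D := ‖ζ - z k‖
  have hr₀ : r₀ < 1 := max_lt hζ (hz k)
  have hC : 0 < (1 - r₀ ^ 2) ^ p :=
    Real.rpow_pos_of_pos (by nlinarith [norm_nonneg ζ, le_max_left ‖ζ‖ ‖z k‖]) p
  obtain ⟨δ, hδ, hsmall⟩ := hlim (ε * (1 - r₀ ^ 2) ^ p / (D + 1)) (by positivity)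
  refine ⟨1 - δ, by linarith, fun w hw hw1 => ?_⟩
  have hzw : update z l w ∈ polydisc n := update_mem_polydisc hz l hw1
  have hB : ∀ ξ : ℂ, ‖ξ‖ ≤ r₀ →
      blochSum n p f (update (update z l w) k ξ) ≤ ε * (1 - r₀ ^ 2) ^ p / (D + 1) := by
    intro ξ hξ
    have hmem := update_mem_polydisc hzw k (hξ.trans_lt hr₀)
    refine (hsmall _ hmem ((infDist_frontier_polydisc_le hmem l).trans_lt ?_)).le
    rw [update_of_ne hkl.symm, update_self]
    linarith
  have hlip := norm_sub_comp_update_le hp hf hzw k hr₀ hB (le_max_left _ _) (le_max_right _ _)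
  have hzk : update (update z l w) k (z k) = update z l w :=
    update_eq_self_iff.mpr (update_of_ne hkl w z).symm
  rw [← update_comm hkl, hzk] at hlip
  calc _ ≤ ε * (1 - r₀ ^ 2) ^ p / (D + 1) / (1 - r₀ ^ 2) ^ p * D := hlip
    _ = ε * (D / (D + 1)) := by field_simp
    _ ≤ ε * 1 := by gcongr; exact (div_le_one (by positivity)).mpr (by linarith)
    _ = ε := mul_one ε

lemma apply_update_eq_of_two_le (hn : 2 ≤ n) (hp : 0 ≤ p)
    (hf : DifferentiableOn ℂ f (polydisc n)) (hlim : BlochSumTendstoZeroAtFrontier n p f)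
    {z : Fin n → ℂ} (hz : z ∈ polydisc n) (k : Fin n) {ζ : ℂ} (hζ : ‖ζ‖ < 1) :
    f (update z k ζ) = f z := by
  have : Nontrivial (Fin n) := Fin.nontrivial_iff_two_le.mpr hn
  obtain ⟨l, hlk⟩ := exists_ne k
  have hd : DifferentiableOn ℂ (fun w => f (update (update z k ζ) l w) - f (update z l w))
      (ball 0 1) :=
    (differentiableOn_comp_update hf (update_mem_polydisc hz k hζ) l).sub
      (differentiableOn_comp_update hf hz l)
  have hzero := Complex.eq_zero_of_norm_le_near_unit_circle hd
    (fun ε hε => norm_sub_comp_update_update_le_near_unit_circle hp hf hlim hlk.symm hz hζ hε)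
    (hz l)
  have hzl : update (update z k ζ) l (z l) = update z k ζ :=
    update_eq_self_iff.mpr (update_of_ne hlk ζ z).symm
  rwa [hzl, update_eq_self, sub_eq_zero] at hzero

end

/-- If the Bloch-type quantity of a holomorphic function on the polydisc tends to 0
at the boundary, then the function is constant. -/
theorem constant_of_blochSum_tendsto_zero_at_boundary
    (n : ℕ) (hn : 2 ≤ n) (p : ℝ) (hp : 0 < p)
    (f : (Fin n → ℂ) → ℂ) (hf : DifferentiableOn ℂ f (polydisc n))
    (hlim : ∀ ε : ℝ, 0 < ε → ∃ δ : ℝ, 0 < δ ∧ ∀ z ∈ polydisc n,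
      Metric.infDist z (frontier (polydisc n)) < δ → blochSum n p f z < ε) :
    ∀ z ∈ polydisc n, ∀ w ∈ polydisc n, f z = f w := by
  intro z hz w hw
  rw [polydisc_eq_pi] at hz hw
  refine apply_eq_of_forall_apply_update_eq (fun x hx k ζ hζ => ?_) hz hw
  rw [← polydisc_eq_pi] at hx
  exact apply_update_eq_of_two_le hn hp.le hf hlim hx k (mem_ball_zero_iff.mp hζ)
end
end

section
/- Fix p > 0, an index l ∈ {1,…,n}, and w ∈ ℂ with |w| < 1. Define f_w : U^n → ℂ by f_w(z) = ∫_0^{z_l} (1 − w̄ t)^{−p} dt (the integral taken along the straight segment from 0 to z_l in the unit disc). Then f_w is holomorphic on U^n, ‖f_w‖_p ≤ 2^p, and f_w lies in the little p-Bloch space B^p_0(U^n), i.e., f_w is the limit in the norm ‖·‖_p of a sequence of polynomials. -/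
open Metric Set Filter

noncomputable section

/-! Along the segment from `0` to `z_l`, `f_w` is the integral of `g ζ = (1 - w̄ ζ)^(-p)`, which is
holomorphic on a disc of radius `ρ > 1`; differentiating under the integral sign gives `f_w' = g`.
As `f_w` depends on `z_l` alone, its Bloch sum at `z` is
`|g (z_l)| (1 - |z_l|²)^p ≤ (1 - |z_l|)^(-p) (1 - |z_l|²)^p = (1 + |z_l|)^p ≤ 2^p`.
Truncating the Taylor series of `g` uniformly on the closed unit disc and integrating term by term
gives polynomials whose Bloch distance to `f_w` is at most the truncation error. -/

open intervalIntegral MeasureTheory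

lemma ofReal_mul_mem_closedBall {s : ℝ} (hs : s ∈ Icc (0 : ℝ) 1) {x : ℂ} {r : ℝ}
    (hx : x ∈ closedBall (0 : ℂ) r) : (s : ℂ) * x ∈ closedBall (0 : ℂ) r := by
  rw [mem_closedBall_zero_iff, norm_mul, Complex.norm_real, Real.norm_of_nonneg hs.1] at *
  nlinarith [hs.2, norm_nonneg x]

lemma continuousOn_comp_ofReal_mul {h : ℂ → ℂ} {r : ℝ} {x : ℂ}
    (hh : ContinuousOn h (closedBall 0 r)) (hx : x ∈ closedBall (0 : ℂ) r) :
    ContinuousOn (fun s : ℝ => h (s * x)) (Icc 0 1) :=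
  hh.comp (by fun_prop) fun _ hs => ofReal_mul_mem_closedBall hs hx

section SegmentIntegral

variable {g : ℂ → ℂ} {R : ℝ} {ζ : ℂ}

lemma hasDerivAt_integral_comp_ofReal_mul (hg : DifferentiableOn ℂ g (ball 0 R))
    (hζ : ζ ∈ ball (0 : ℂ) R) :
    HasDerivAt (fun x => ∫ s in (0 : ℝ)..1, g (s * x))
      (∫ s in (0 : ℝ)..1, s * deriv g (s * ζ)) ζ := by
  obtain ⟨r, hζr, hrR⟩ := exists_between (mem_ball_zero_iff.mp hζ)
  have hK : closedBall (0 : ℂ) r ⊆ ball 0 R := closedBall_subset_ball hrR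
  have hnhds : ball ζ (r - ‖ζ‖) ⊆ closedBall 0 r :=
    (ball_subset_ball' (by simp)).trans ball_subset_closedBall
  have hIoc : Set.uIoc (0 : ℝ) 1 ⊆ Icc 0 1 := by
    rw [uIoc_of_le zero_le_one]; exact Ioc_subset_Icc_self
  have hg' : ContinuousOn (deriv g) (closedBall 0 r) :=
    (hg.deriv isOpen_ball).continuousOn.mono hK
  obtain ⟨M, hM⟩ := (isCompact_closedBall (0 : ℂ) r).exists_bound_of_continuousOn hg'
  have hζK : ζ ∈ closedBall (0 : ℂ) r := mem_closedBall_zero_iff.mpr hζr.le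
  refine (hasDerivAt_integral_of_dominated_loc_of_deriv_le (bound := fun _ => M)
    (F' := fun x (s : ℝ) => s * deriv g (s * x)) (ball_mem_nhds ζ (sub_pos.2 hζr))
    ?_ ?_ ?_ ?_ intervalIntegrable_const ?_).2
  · filter_upwards [ball_mem_nhds ζ (sub_pos.2 hζr)] with x hx
    exact ((continuousOn_comp_ofReal_mul (hg.continuousOn.mono hK) (hnhds hx)).mono
      hIoc).aestronglyMeasurable measurableSet_uIoc
  · exact (continuousOn_comp_ofReal_mul (hg.continuousOn.mono hK) hζK).intervalIntegrable_of_Icc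
      zero_le_one
  · exact ((Complex.continuous_ofReal.continuousOn.mul
      (continuousOn_comp_ofReal_mul hg' hζK)).mono hIoc).aestronglyMeasurable measurableSet_uIoc
  · refine ae_of_all _ fun s hs x hx => ?_
    have hs' := hIoc hs
    rw [norm_mul, Complex.norm_real, Real.norm_of_nonneg hs'.1]
    have := hM _ (ofReal_mul_mem_closedBall hs' (hnhds hx))
    nlinarith [hs'.2, norm_nonneg (deriv g (s * x))]
  · refine ae_of_all _ fun s hs x hx => ?_
    have hd : DifferentiableAt ℂ g (s * x) := hg.differentiableAt
      (isOpen_ball.mem_nhds (hK (ofReal_mul_mem_closedBall (hIoc hs) (hnhds hx))))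
    exact (hd.hasDerivAt.comp x ((hasDerivAt_id x).const_mul (s : ℂ))).congr_deriv (by ring)

theorem hasDerivAt_mul_integral_comp_ofReal_mul (hg : DifferentiableOn ℂ g (ball 0 R))
    (hζ : ζ ∈ ball (0 : ℂ) R) :
    HasDerivAt (fun x => x * ∫ s in (0 : ℝ)..1, g (s * x)) (g ζ) ζ := by
  have hK : closedBall (0 : ℂ) ‖ζ‖ ⊆ ball 0 R := closedBall_subset_ball (mem_ball_zero_iff.mp hζ)
  have hζK : ζ ∈ closedBall (0 : ℂ) ‖ζ‖ := mem_closedBall_zero_iff.mpr le_rfl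
  have hint : IntervalIntegrable (fun s : ℝ => g (s * ζ)) volume 0 1 :=
    (continuousOn_comp_ofReal_mul (hg.continuousOn.mono hK) hζK).intervalIntegrable_of_Icc
      zero_le_one
  have hint' : IntervalIntegrable (fun s : ℝ => s * deriv g (s * ζ)) volume 0 1 :=
    (Complex.continuous_ofReal.continuousOn.mul (continuousOn_comp_ofReal_mul
      ((hg.deriv isOpen_ball).continuousOn.mono hK) hζK)).intervalIntegrable_of_Icc zero_le_one
  have hFTC : ∫ s in (0 : ℝ)..1, (g (s * ζ) + ζ * (s * deriv g (s * ζ))) = g ζ := by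
    have hderiv : ∀ s ∈ uIcc (0 : ℝ) 1, HasDerivAt (fun s : ℝ => (s : ℂ) * g (s * ζ))
        (g (s * ζ) + ζ * (s * deriv g (s * ζ))) s := by
      intro s hs
      rw [Set.uIcc_of_le zero_le_one] at hs
      have hd : DifferentiableAt ℂ g (s * ζ) :=
        hg.differentiableAt (isOpen_ball.mem_nhds (hK (ofReal_mul_mem_closedBall hs hζK)))
      have := (hasDerivAt_id (s : ℂ)).mul
        (hd.hasDerivAt.comp (s : ℂ) ((hasDerivAt_id (s : ℂ)).mul_const ζ))
      exact this.comp_ofReal.congr_deriv (by simp only [id, Function.comp, one_mul]; ring)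
    rw [integral_eq_sub_of_hasDerivAt hderiv (hint.add (hint'.const_mul ζ))]
    simp
  refine ((hasDerivAt_id ζ).mul (hasDerivAt_integral_comp_ofReal_mul hg hζ)).congr_deriv ?_
  rw [← hFTC, integral_add hint (hint'.const_mul ζ), intervalIntegral.integral_const_mul, id,
    one_mul]

end SegmentIntegral

lemma exists_norm_sub_sum_pow_lt {h : ℂ → ℂ} {r R : ℝ} (hr : 0 ≤ r) (hrR : r < R)
    (hh : DifferentiableOn ℂ h (ball 0 R)) {ε : ℝ} (hε : 0 < ε) :
    ∃ (N : ℕ) (c : ℕ → ℂ), ∀ ζ ∈ closedBall (0 : ℂ) r,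
      ‖h ζ - ∑ i ∈ Finset.range N, c i * ζ ^ i‖ < ε := by
  obtain ⟨r₁, hrr₁, hr₁R⟩ := exists_between hrR
  obtain ⟨r₂, hrr₂, hr₂r₁⟩ := exists_between hrr₁
  lift r₁ to NNReal using by linarith
  lift r₂ to NNReal using by linarith
  have hps := (hh.mono (closedBall_subset_ball hr₁R)).hasFPowerSeriesOnBall
    (by exact_mod_cast hr.trans_lt hrr₁)
  obtain ⟨N, hN⟩ := (Metric.tendstoUniformlyOn_iff.mp
    (hps.tendstoUniformlyOn' (by exact_mod_cast hr₂r₁)) ε hε).exists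
  refine ⟨N, fun i => (cauchyPowerSeries h 0 r₁).coeff i, fun ζ hζ => ?_⟩
  have := hN ζ (closedBall_subset_ball hrr₂ hζ)
  simpa only [dist_eq_norm, sub_zero, FormalMultilinearSeries.partialSum,
    FormalMultilinearSeries.apply_eq_pow_smul_coeff, smul_eq_mul, mul_comm] using this

lemma mul_one_sub_sq_rpow_le {p x a C : ℝ} (hp : 0 ≤ p) (hx₀ : 0 ≤ x) (hx : x ≤ 1)
    (ha₀ : 0 ≤ a) (ha : a ≤ C) : a * (1 - x ^ 2) ^ p ≤ C := by
  have hw₀ : 0 ≤ 1 - x ^ 2 := by nlinarith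
  have hw : (1 - x ^ 2) ^ p ≤ 1 := Real.rpow_le_one hw₀ (by nlinarith) hp
  nlinarith [Real.rpow_nonneg hw₀ p]

section Bloch

variable {n : ℕ} {p : ℝ} {l : Fin n} {G G' : ℂ → ℂ}

lemma zero_mem_polydisc : (0 : Fin n → ℂ) ∈ polydisc n := fun _ => by simp

lemma blochSum_comp_eval {z : Fin n → ℂ} {a : ℂ} (hG : HasDerivAt G a (z l)) :
    blochSum n p (fun z => G (z l)) z = ‖a‖ * (1 - ‖z l‖ ^ 2) ^ p := by
  have hfd : ∀ v, fderiv ℂ (fun z : Fin n → ℂ => G (z l)) z v = v l * a := fun v => by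
    have : HasFDerivAt (fun z : Fin n → ℂ => G (z l)) _ z :=
      hG.hasFDerivAt.comp z (hasFDerivAt_apply (𝕜 := ℂ) l z)
    rw [this.fderiv]
    simp
  rw [blochSum, Finset.sum_eq_single l]
  · simp [hfd]
  · intro k _ hkl
    simp [hfd, Pi.single_eq_of_ne (Ne.symm hkl)]
  · simp

lemma mem_upperBounds_blochSum_comp_eval {C : ℝ}
    (hG : ∀ ζ : ℂ, ‖ζ‖ < 1 → HasDerivAt G (G' ζ) ζ)
    (hC : ∀ ζ : ℂ, ‖ζ‖ < 1 → ‖G' ζ‖ * (1 - ‖ζ‖ ^ 2) ^ p ≤ C) :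
    C ∈ upperBounds (blochSum n p (fun z => G (z l)) '' polydisc n) := by
  rintro _ ⟨z, hz, rfl⟩
  rw [blochSum_comp_eval (hG _ (hz l))]
  exact hC _ (hz l)

lemma blochNorm_comp_eval_le {C : ℝ} (hG : ∀ ζ : ℂ, ‖ζ‖ < 1 → HasDerivAt G (G' ζ) ζ)
    (hC : ∀ ζ : ℂ, ‖ζ‖ < 1 → ‖G' ζ‖ * (1 - ‖ζ‖ ^ 2) ^ p ≤ C) :
    blochNorm n p (fun z => G (z l)) ≤ ‖G 0‖ + C :=
  add_le_add_right (csSup_le ((Set.nonempty_of_mem zero_mem_polydisc).image _)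
    (mem_upperBounds_blochSum_comp_eval hG hC)) _

end Bloch

lemma hasDerivAt_sum_pow_succ_div (c : ℕ → ℂ) (N : ℕ) (ζ : ℂ) :
    HasDerivAt (fun ζ => ∑ i ∈ Finset.range N, c i / (i + 1) * ζ ^ (i + 1))
      (∑ i ∈ Finset.range N, c i * ζ ^ i) ζ := by
  refine HasDerivAt.fun_sum fun i _ => ((hasDerivAt_pow (i + 1) ζ).const_mul _).congr_deriv ?_
  have : ((i : ℂ) + 1) ≠ 0 := Nat.cast_add_one_ne_zero i
  push_cast
  field_simp

theorem memLittleBloch_comp_eval {n : ℕ} {p R : ℝ} {G : ℂ → ℂ} (l : Fin n) (hp : 0 ≤ p)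
    (hR : 1 < R) (hG : DifferentiableOn ℂ G (ball 0 R)) :
    MemLittleBloch n p (fun z => G (z l)) := by
  have hdisc : ∀ ζ : ℂ, ‖ζ‖ < 1 → ζ ∈ ball (0 : ℂ) R := fun ζ hζ =>
    mem_ball_zero_iff.mpr (hζ.trans hR)
  have hG' : ∀ ζ : ℂ, ‖ζ‖ < 1 → HasDerivAt G (deriv G ζ) ζ := fun ζ hζ =>
    (hG.differentiableAt (isOpen_ball.mem_nhds (hdisc ζ hζ))).hasDerivAt
  have hdG := hG.deriv isOpen_ball
  obtain ⟨M, hM⟩ := (isCompact_closedBall (0 : ℂ) 1).exists_bound_of_continuousOn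
    (hdG.continuousOn.mono (closedBall_subset_ball hR))
  have hdiff : DifferentiableOn ℂ (fun z => G (z l)) (polydisc n) := fun z hz =>
    ((hG' _ (hz l)).differentiableAt.comp z
      (differentiableAt_apply (𝕜 := ℂ) l z)).differentiableWithinAt
  have hbdd : M ∈ upperBounds (blochSum n p (fun z => G (z l)) '' polydisc n) :=
    mem_upperBounds_blochSum_comp_eval hG' fun ζ hζ => mul_one_sub_sq_rpow_le hp
      (norm_nonneg _) hζ.le (norm_nonneg _) (hM ζ (mem_closedBall_zero_iff.mpr hζ.le))
  refine ⟨⟨hdiff, M, hbdd⟩, fun ε hε => ?_⟩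
  obtain ⟨N, c, hc⟩ := exists_norm_sub_sum_pow_lt zero_le_one hR hdG (half_pos hε)
  set Q : ℂ → ℂ := fun ζ => G 0 + ∑ i ∈ Finset.range N, c i / (i + 1) * ζ ^ (i + 1)
  have hQpoly : IsPolyFn n fun z => Q (z l) := ⟨MvPolynomial.C (G 0) +
      ∑ i ∈ Finset.range N, MvPolynomial.C (c i / (i + 1)) * MvPolynomial.X l ^ (i + 1),
    fun z => by simp [Q]⟩
  refine ⟨fun z => Q (z l), hQpoly, ?_⟩
  have hGQ : ∀ ζ : ℂ, ‖ζ‖ < 1 →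
      HasDerivAt (fun ζ => G ζ - Q ζ) (deriv G ζ - ∑ i ∈ Finset.range N, c i * ζ ^ i) ζ :=
    fun ζ hζ => (hG' ζ hζ).sub ((hasDerivAt_sum_pow_succ_div c N ζ).const_add (G 0))
  calc blochNorm n p (fun z => G (z l) - Q (z l)) ≤ ‖G 0 - Q 0‖ + ε / 2 :=
        blochNorm_comp_eval_le (G := fun ζ => G ζ - Q ζ) hGQ fun ζ hζ =>
          mul_one_sub_sq_rpow_le hp (norm_nonneg _) hζ.le (norm_nonneg _)
            (hc ζ (mem_closedBall_zero_iff.mpr hζ.le)).le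
    _ < ε := by simp [Q]; linarith

lemma differentiableOn_one_sub_mul_cpow (c : ℂ) {v : ℂ} {R : ℝ} (h : ‖v‖ * R < 1) :
    DifferentiableOn ℂ (fun ζ => (1 - v * ζ) ^ c) (ball 0 R) := by
  intro ζ hζ
  have hvζ : ‖-(v * ζ)‖ < 1 := by
    rw [norm_neg, norm_mul]
    exact (mul_le_mul_of_nonneg_left (mem_ball_zero_iff.mp hζ).le (norm_nonneg v)).trans_lt h
  have hslit : 1 - v * ζ ∈ Complex.slitPlane := by
    simpa [sub_eq_add_neg] using Complex.mem_slitPlane_of_norm_lt_one hvζ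
  exact ((differentiableAt_const _).sub (differentiableAt_id.const_mul v)).cpow_const hslit
    |>.differentiableWithinAt

lemma norm_one_sub_mul_cpow_neg_mul_le {p : ℝ} (hp : 0 ≤ p) {v ζ : ℂ} (hv : ‖v‖ ≤ 1)
    (hζ : ‖ζ‖ < 1) : ‖(1 - v * ζ) ^ (-(p : ℂ))‖ * (1 - ‖ζ‖ ^ 2) ^ p ≤ 2 ^ p := by
  have h₀ : 0 < 1 - ‖ζ‖ := by linarith
  have hnorm : 1 - ‖ζ‖ ≤ ‖1 - v * ζ‖ := calc
    1 - ‖ζ‖ ≤ 1 - ‖v * ζ‖ := by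
      rw [norm_mul]; nlinarith [norm_nonneg v, norm_nonneg ζ]
    _ ≤ ‖1 - v * ζ‖ := by simpa using norm_sub_norm_le (1 : ℂ) (v * ζ)
  calc ‖(1 - v * ζ) ^ (-(p : ℂ))‖ * (1 - ‖ζ‖ ^ 2) ^ p
      ≤ (1 - ‖ζ‖) ^ (-p) * ((1 - ‖ζ‖) ^ p * (1 + ‖ζ‖) ^ p) := by
        rw [← Complex.ofReal_neg, Complex.norm_cpow_real, ← Real.mul_rpow h₀.le (by positivity),
          show 1 - ‖ζ‖ ^ 2 = (1 - ‖ζ‖) * (1 + ‖ζ‖) by ring]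
        exact mul_le_mul_of_nonneg_right (Real.rpow_le_rpow_of_nonpos h₀ hnorm (by linarith))
          (by positivity)
    _ = (1 + ‖ζ‖) ^ p := by
        rw [← mul_assoc, ← Real.rpow_add h₀, neg_add_cancel, Real.rpow_zero, one_mul]
    _ ≤ 2 ^ p := by gcongr; linarith

/-- Lemma 2: the test function f_w(z) = ∫_0^{z_l} (1 - conj(w) t)^{-p} dt is holomorphic on
the polydisc, has p-Bloch norm at most 2^p, and belongs to the little p-Bloch space. -/
theorem test_function_in_little_bloch (n : ℕ) (p : ℝ) (hp : 0 < p)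
    (l : Fin n) (w : ℂ) (hw : ‖w‖ < 1)
    (fw : (Fin n → ℂ) → ℂ)
    (hfw : ∀ z, fw z = z l * ∫ s in (0:ℝ)..1,
      (1 - (starRingEnd ℂ) w * ((s : ℂ) * z l)) ^ (-(p : ℂ))) :
    DifferentiableOn ℂ fw (polydisc n) ∧ blochNorm n p fw ≤ (2 : ℝ) ^ p ∧
      MemLittleBloch n p fw := by
  obtain ⟨ρ, hρ, hρw⟩ : ∃ ρ : ℝ, 1 < ρ ∧ ‖w‖ * ρ < 1 :=
    ⟨2 / (1 + ‖w‖), by rw [one_lt_div (by positivity)]; linarith,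
      by rw [mul_div_assoc', div_lt_one (by positivity)]; linarith⟩
  set g : ℂ → ℂ := fun ζ => (1 - (starRingEnd ℂ) w * ζ) ^ (-(p : ℂ))
  have hg : DifferentiableOn ℂ g (ball 0 ρ) :=
    differentiableOn_one_sub_mul_cpow _ (by rwa [Complex.norm_conj])
  set F : ℂ → ℂ := fun x => x * ∫ s in (0:ℝ)..1, g (s * x)
  have hF : ∀ ζ ∈ ball (0 : ℂ) ρ, HasDerivAt F (g ζ) ζ := fun ζ hζ =>
    hasDerivAt_mul_integral_comp_ofReal_mul hg hζ
  obtain rfl : fw = fun z => F (z l) := funext hfw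
  have hlittle := memLittleBloch_comp_eval l hp.le hρ fun ζ hζ =>
    (hF ζ hζ).differentiableAt.differentiableWithinAt
  refine ⟨hlittle.1.1, ?_, hlittle⟩
  calc blochNorm n p (fun z => F (z l)) ≤ ‖F 0‖ + 2 ^ p :=
        blochNorm_comp_eval_le (fun ζ hζ => hF ζ (mem_ball_zero_iff.mpr (hζ.trans hρ)))
          fun ζ hζ => norm_one_sub_mul_cpow_neg_mul_le hp.le (by simpa using hw.le) hζ
    _ = 2 ^ p := by simp [F]
end
end
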